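/- Let Δ be a probabilistic one-counter automaton with control states Q, |Q| = k. For all control states p, q and all m, n ∈ ℕ: if dist(pXᵐZ) = dist(qXⁿZ) = ∞, then pXᵐZ ∼ qXⁿZ if and only if pXᵐZ ∼_k qXⁿZ. -/

import Mathlib

open scoped ENNReal

noncomputable section

/-- A probabilistic labelled transition system (pLTS): states `S`, alphabet `A`,
and a transition relation into probability distributions (`PMF`s) on `S`. -/
structure PLTS (S : Type) (A : Type) where
  Tr : S → A → PMF S → Prop

namespace PLTS

variable {S A : Type}

/-- The mass that a distribution assigns to a set of states. -/
def mass (d : PMF S) (E : Set S) : ℝ≥0∞ := ∑' s : E, d s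

/-- Two distributions are `r`-equivalent if they assign equal mass to every
`r`-equivalence class (for an equivalence `r`, the classes are the sets `{t | r s t}`). -/
def REquiv (r : S → S → Prop) (d d' : PMF S) : Prop :=
  ∀ s : S, mass d {t | r s t} = mass d' {t | r s t}

/-- An equivalence relation is a bisimulation if related states can match
each other's transitions with `r`-equivalent target distributions. -/
def IsBisimulation (L : PLTS S A) (r : S → S → Prop) : Prop :=
  Equivalence r ∧
    ∀ s t, r s t → ∀ a d, L.Tr s a d → ∃ d', L.Tr t a d' ∧ REquiv r d d'

/-- Bisimilarity: the union of all bisimulation relations. -/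
def Bisim (L : PLTS S A) (s t : S) : Prop :=
  ∃ r, L.IsBisimulation r ∧ r s t

/-- The bisimulation approximants `∼ₙ`. -/
def approx (L : PLTS S A) : ℕ → S → S → Prop
  | 0 => fun _ _ => True
  | n + 1 => fun s t =>
      (∀ a d, L.Tr s a d → ∃ d', L.Tr t a d' ∧ REquiv (L.approx n) d d') ∧
      (∀ a d', L.Tr t a d' → ∃ d, L.Tr s a d ∧ REquiv (L.approx n) d d')

/-- A pLTS is finitely branching if every state has finitely many transitions. -/
def FinBranching (L : PLTS S A) : Prop :=
  ∀ s, {p : A × PMF S | L.Tr s p.1 p.2}.Finite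

/-- One-step successor relation: `s → s'` iff some transition of `s` gives `s'`
positive probability. -/
def Step (L : PLTS S A) (s s' : S) : Prop :=
  ∃ a d, L.Tr s a d ∧ d s' ≠ 0

end PLTS

/-- The rules of a probabilistic pushdown automaton (pPDA) with control states
`Q`, stack alphabet `Γ`, input alphabet `A`: a rule `qX –a↪ d` is a tuple
`(q, X, a, d)` where `d` is a distribution over pairs of a control state and
a string of length at most two that replaces the top symbol. -/
def PPDARules (Q Γ A : Type) := Q → Γ → A → PMF (Q × List Γ) → Prop

/-- Well-formedness of pPDA rules: target distributions are supported on
configurations `(p, α)` with `|α| ≤ 2` (i.e. `α ∈ Γ^{≤2}`). -/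
def PPDAWf {Q Γ A : Type} (Δ : PPDARules Q Γ A) : Prop :=
  ∀ q X a d, Δ q X a d → ∀ p (α : List Γ), d (p, α) ≠ 0 → α.length ≤ 2

/-- A nondeterministic PDA is a pPDA all of whose rules use Dirac distributions. -/
def IsPDA {Q Γ A : Type} (Δ : PPDARules Q Γ A) : Prop :=
  ∀ q X a d, Δ q X a d → ∃ c, d = PMF.pure c

/-- The pLTS induced by a pPDA on configurations `Q × Γ*`: a rule `qX –a↪ d`
and a tail `β ∈ Γ*` induce the transition `qXβ –a→ d'` with `d'(pαβ) = d(pα)`;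
configurations with empty stack have no transitions. -/
def PPDARules.plts {Q Γ A : Type} (Δ : PPDARules Q Γ A) : PLTS (Q × List Γ) A where
  Tr := fun c a d' => ∃ (q : Q) (X : Γ) (β : List Γ) (d : PMF (Q × List Γ)),
    c = (q, X :: β) ∧ Δ q X a d ∧ d' = d.map (fun pα => (pα.1, pα.2 ++ β))

/-- The stack alphabet `{X, Z}` of a one-counter automaton. -/
inductive OCSym : Type
  | X : OCSym
  | Z : OCSym
deriving DecidableEq

/-- Well-formedness of pOCA rules: `Z` always and only occurs at the bottom of
the stack, i.e. rules for top `X` rewrite `X` into `ε`, `X` or `XX`, and rules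
for top `Z` rewrite `Z` into `Z` or `XZ`. -/
def POCAWf {Q A : Type} (Δ : PPDARules Q OCSym A) : Prop :=
  (∀ q a d, Δ q OCSym.X a d → ∀ p (α : List OCSym), d (p, α) ≠ 0 →
      α = [] ∨ α = [OCSym.X] ∨ α = [OCSym.X, OCSym.X]) ∧
  (∀ q a d, Δ q OCSym.Z a d → ∀ p (α : List OCSym), d (p, α) ≠ 0 →
      α = [OCSym.Z] ∨ α = [OCSym.X, OCSym.Z])

/-- The configuration `pXᵐZ` of a pOCA. -/
def oconf {Q : Type} (p : Q) (m : ℕ) : Q × List OCSym :=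
  (p, List.replicate m OCSym.X ++ [OCSym.Z])

/-- The finite pLTS `ℱ_Δ` underlying a pOCA: `p –a→ d'` iff there is a rule
`pX –a↪ d` with `d'(q) = d(q,ε) + d(q,X) + d(q,XX)` for all `q`. -/
def underlying {Q A : Type} (Δ : PPDARules Q OCSym A) : PLTS Q A where
  Tr := fun p a d' => ∃ d, Δ p OCSym.X a d ∧
    ∀ q : Q, d' q = d (q, []) + d (q, [OCSym.X]) + d (q, [OCSym.X, OCSym.X])

/-- The disjoint-union pLTS of two pLTSs over the same alphabet. -/
def PLTS.sum {S₁ S₂ A : Type} (L₁ : PLTS S₁ A) (L₂ : PLTS S₂ A) :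
    PLTS (S₁ ⊕ S₂) A where
  Tr := fun s a d =>
    (∃ s₁ d₁, s = Sum.inl s₁ ∧ L₁.Tr s₁ a d₁ ∧ d = d₁.map Sum.inl) ∨
    (∃ s₂ d₂, s = Sum.inr s₂ ∧ L₂.Tr s₂ a d₂ ∧ d = d₂.map Sum.inr)

/-- `INC`: configurations `pXᵐZ` that are not related by the `k`-th
approximant (`k = |Q|`) to any state `q` of the underlying finite pLTS, in the
disjoint union of `S(Δ)` and `ℱ_Δ`. -/
def InINC {Q A : Type} [Fintype Q] (Δ : PPDARules Q OCSym A)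
    (p : Q) (m : ℕ) : Prop :=
  ∀ q : Q, ¬ (Δ.plts.sum (underlying Δ)).approx (Fintype.card Q)
      (Sum.inl (oconf p m)) (Sum.inr q)

/-- `ℓ` one-step successor moves lead from `s` to `t`. -/
def PLTS.StepN {S A : Type} (L : PLTS S A) : ℕ → S → S → Prop
  | 0, s, t => s = t
  | n + 1, s, t => ∃ u, L.Step s u ∧ L.StepN n u t

/-- `dist(c)`: the least number of one-step successor moves in `S(Δ)` leading
from the configuration `c` to some configuration in `INC` (and `∞ = ⊤` if
`INC` is unreachable). -/
def distINC {Q A : Type} [Fintype Q] (Δ : PPDARules Q OCSym A)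
    (c : Q × List OCSym) : ℕ∞ :=
  sInf {n : ℕ∞ | ∃ ℓ : ℕ, n = (ℓ : ℕ∞) ∧
    ∃ (p : Q) (m : ℕ), Δ.plts.StepN ℓ c (oconf p m) ∧ InINC Δ p m}

/-!
In the disjoint union of `S(Δ)` and `ℱ_Δ`, a configuration with `dist = ∞` is not in `INC`, so it
is `∼ₖ`-equivalent to some state of `ℱ_Δ`, and its successors again have `dist = ∞`. The
approximants restricted to the `k` states of `ℱ_Δ` form a descending chain of partitions, which
must become stationary by index `k - 1`; transported through these anchoring states, `∼ₖ₋₁` and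
`∼ₖ` coincide on the step-closed set of configurations with `dist = ∞`. On a step-closed set
where two consecutive approximants coincide, that approximant (together with the identity) is a
bisimulation.
-/

namespace Setoid

lemma card_quotient_lt_card_quotient {Q : Type} [Finite Q] {s t : Setoid Q} (h : s < t) :
    Nat.card (Quotient t) < Nat.card (Quotient s) := by
  have hsurj : Function.Surjective (Setoid.map_of_le h.le) :=
    Quotient.ind fun a => ⟨Quotient.mk s a, rfl⟩
  refine (Nat.card_le_card_of_surjective _ hsurj).lt_of_ne fun heq => h.not_ge ?_
  intro a b hab
  exact Quotient.exact ((hsurj.bijective_of_nat_card_le heq.ge).injective (Quotient.sound hab))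

/-- Each strict refinement adds a class, and there are at most `|Q|` classes. -/
lemma exists_lt_card_le_succ_of_antitone {Q : Type} [Finite Q] [Nonempty Q] {r : ℕ → Setoid Q}
    (hr : Antitone r) : ∃ n < Nat.card Q, r n ≤ r (n + 1) := by
  by_contra! hne
  have hgrow : ∀ n ≤ Nat.card Q, n + 1 ≤ Nat.card (Quotient (r n)) := by
    intro n hn
    induction n with
    | zero =>
      have := ‹Nonempty Q›.map (Quotient.mk (r 0))
      exact Nat.card_pos
    | succ n ih =>
      exact (ih (by omega)).trans_lt
        (card_quotient_lt_card_quotient (lt_of_le_not_ge (hr n.le_succ) (hne n (by omega))))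
  have := (hgrow _ le_rfl).trans (Nat.card_le_card_of_surjective _ Quotient.mk_surjective)
  omega

end Setoid

namespace PLTS

section Mass

variable {S T : Type}

lemma mass_eq_toOuterMeasure (d : PMF S) (C : Set S) : mass d C = d.toOuterMeasure C :=
  (tsum_subtype C d).trans (PMF.toOuterMeasure_apply d C).symm

@[simp]
lemma mass_empty (d : PMF S) : mass d ∅ = 0 := by
  rw [mass_eq_toOuterMeasure, MeasureTheory.measure_empty]

lemma mass_eq_zero_iff {d : PMF S} {C : Set S} : mass d C = 0 ↔ Disjoint d.support C := by
  rw [mass_eq_toOuterMeasure, PMF.toOuterMeasure_apply_eq_zero_iff]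

lemma mass_congr_support {d : PMF S} {C C' : Set S} (h : ∀ s ∈ d.support, s ∈ C ↔ s ∈ C') :
    mass d C = mass d C' := by
  simp only [mass_eq_toOuterMeasure]
  exact PMF.toOuterMeasure_apply_eq_of_inter_support_eq d
    (Set.ext fun s => and_congr_left fun hs => h s hs)

lemma mass_map (f : S → T) (d : PMF S) (C : Set T) : mass (d.map f) C = mass d (f ⁻¹' C) := by
  simp only [mass_eq_toOuterMeasure, PMF.toOuterMeasure_map_apply]

lemma mass_eq_tsum_mass_fiber_inter {γ : Type} (g : S → γ) (d : PMF S) (C : Set S) :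
    mass d C = ∑' y, mass d (g ⁻¹' {y} ∩ C) := by
  simp only [mass_eq_toOuterMeasure, PMF.toOuterMeasure_apply]
  simp_rw [← Set.indicator_indicator, ← tsum_subtype (g ⁻¹' {_})]
  exact (ENNReal.tsum_fiberwise _ g).symm

end Mass

namespace REquiv

variable {S T : Type} {r r' : S → S → Prop} {d d' d'' : PMF S}

lemma refl (r : S → S → Prop) (d : PMF S) : REquiv r d d := fun _ => rfl

lemma symm (h : REquiv r d d') : REquiv r d' d := fun s => (h s).symm

lemma trans (h : REquiv r d d') (h' : REquiv r d' d'') : REquiv r d d'' :=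
  fun s => (h s).trans (h' s)

lemma mass_eq_of_saturated (hr : Equivalence r) (h : REquiv r d d') {C : Set S}
    (hC : ∀ ⦃s t⦄, r s t → s ∈ C → t ∈ C) : mass d C = mass d' C := by
  let st : Setoid S := ⟨r, hr⟩
  rw [mass_eq_tsum_mass_fiber_inter (Quotient.mk st) d,
    mass_eq_tsum_mass_fiber_inter (Quotient.mk st) d']
  refine tsum_congr (Quotient.ind fun s => ?_)
  have hfiber : Quotient.mk st ⁻¹' {Quotient.mk st s} = {t | r s t} :=
    Set.ext fun t => Quotient.eq.trans ⟨hr.symm, hr.symm⟩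
  rw [hfiber]
  by_cases hs : s ∈ C
  · rw [Set.inter_eq_left.2 (show {t | r s t} ⊆ C from fun t ht => hC ht hs)]
    exact h s
  · have hempty : {t | r s t} ∩ C = ∅ :=
      Set.eq_empty_of_forall_notMem fun t ht => hs (hC (hr.symm ht.1) ht.2)
    rw [hempty, mass_empty, mass_empty]

lemma mono (hr : Equivalence r) (htrans : ∀ ⦃a b c⦄, r' a b → r' b c → r' a c)
    (hle : ∀ ⦃a b⦄, r a b → r' a b) (h : REquiv r d d') : REquiv r' d d' :=
  fun _ => h.mass_eq_of_saturated hr fun _ _ hut hsu => htrans hsu (hle hut)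

lemma of_eqOn {G : Set S} (hr' : Equivalence r') (hagree : ∀ x ∈ G, ∀ y ∈ G, r' x y ↔ r x y)
    (hd : d.support ⊆ G) (hd' : d'.support ⊆ G) (h : REquiv r d d') : REquiv r' d d' := by
  intro s
  by_cases hs : ∃ g ∈ G, r' s g
  · obtain ⟨g, hg, hsg⟩ := hs
    have hclass : ∀ t ∈ G, t ∈ {t | r' s t} ↔ t ∈ {t | r g t} := fun t ht =>
      ⟨fun hst => (hagree g hg t ht).1 (hr'.trans (hr'.symm hsg) hst),
        fun hgt => hr'.trans hsg ((hagree g hg t ht).2 hgt)⟩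
    rw [mass_congr_support fun t ht => hclass t (hd ht),
      mass_congr_support fun t ht => hclass t (hd' ht)]
    exact h g
  · push Not at hs
    have hnull : ∀ e : PMF S, e.support ⊆ G → mass e {t | r' s t} = 0 := fun e he =>
      mass_eq_zero_iff.2 (Set.disjoint_left.2 fun t ht hst => hs t (he ht) hst)
    rw [hnull d hd, hnull d' hd']

lemma map_iff (f : S → T) {r : T → T → Prop} (hr : Equivalence r) :
    REquiv r (d.map f) (d'.map f) ↔ REquiv (fun s t => r (f s) (f t)) d d' := by
  refine ⟨fun h s => (mass_map f d _).symm.trans ((h (f s)).trans (mass_map f d' _)),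
    fun h x => ?_⟩
  rw [mass_map, mass_map]
  by_cases hx : ∃ s, r x (f s)
  · obtain ⟨s, hs⟩ := hx
    have hclass : f ⁻¹' {t | r x t} = {t | r (f s) (f t)} :=
      Set.ext fun t => ⟨hr.trans (hr.symm hs), hr.trans hs⟩
    rw [hclass]
    exact h s
  · have hclass : f ⁻¹' {t | r x t} = ∅ :=
      Set.eq_empty_of_forall_notMem fun t ht => hx ⟨t, ht⟩
    rw [hclass, mass_empty, mass_empty]

end REquiv

section Approx

variable {S A : Type} (L : PLTS S A) {r r' : S → S → Prop} {s t u : S}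

def Simulates (r : S → S → Prop) (s t : S) : Prop :=
  ∀ a d, L.Tr s a d → ∃ d', L.Tr t a d' ∧ REquiv r d d'

variable {L}

lemma Simulates.refl (r : S → S → Prop) (s : S) : L.Simulates r s s :=
  fun _ d hd => ⟨d, hd, REquiv.refl r d⟩

lemma Simulates.trans (h : L.Simulates r s t) (h' : L.Simulates r t u) : L.Simulates r s u := by
  intro a d hd
  obtain ⟨d', hd', e⟩ := h a d hd
  obtain ⟨d'', hd'', e'⟩ := h' a d' hd'
  exact ⟨d'', hd'', e.trans e'⟩

lemma Simulates.mono (h : L.Simulates r s t) (hrr : ∀ d d', REquiv r d d' → REquiv r' d d') :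
    L.Simulates r' s t :=
  fun a d hd => (h a d hd).imp fun d' hd' => ⟨hd'.1, hrr d d' hd'.2⟩

lemma approx_succ_iff {n : ℕ} :
    L.approx (n + 1) s t ↔ L.Simulates (L.approx n) s t ∧ L.Simulates (L.approx n) t s :=
  and_congr Iff.rfl
    ⟨fun h a d hd => (h a d hd).imp fun _ hd' => ⟨hd'.1, hd'.2.symm⟩,
      fun h a d hd => (h a d hd).imp fun _ hd' => ⟨hd'.1, hd'.2.symm⟩⟩

lemma approx_refl : ∀ (n : ℕ) (s : S), L.approx n s s
  | 0, _ => trivial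
  | _ + 1, s => approx_succ_iff.2 ⟨Simulates.refl _ s, Simulates.refl _ s⟩

lemma approx_symm : ∀ {n : ℕ}, L.approx n s t → L.approx n t s
  | 0, _ => trivial
  | _ + 1, h => approx_succ_iff.2 (approx_succ_iff.1 h).symm

lemma approx_trans : ∀ {n : ℕ}, L.approx n s t → L.approx n t u → L.approx n s u
  | 0, _, _ => trivial
  | _ + 1, h, h' =>
    approx_succ_iff.2 ⟨(approx_succ_iff.1 h).1.trans (approx_succ_iff.1 h').1,
      (approx_succ_iff.1 h').2.trans (approx_succ_iff.1 h).2⟩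

variable (L) in
lemma approx_equivalence (n : ℕ) : Equivalence (L.approx n) :=
  ⟨L.approx_refl n, approx_symm, approx_trans⟩

lemma approx_of_approx_succ : ∀ {n : ℕ} {s t : S}, L.approx (n + 1) s t → L.approx n s t
  | 0, _, _, _ => trivial
  | n + 1, _, _, h =>
    have hrr : ∀ d d', REquiv (L.approx (n + 1)) d d' → REquiv (L.approx n) d d' :=
      fun _ _ => REquiv.mono (L.approx_equivalence (n + 1)) (fun _ _ _ => approx_trans)
        fun _ _ => approx_of_approx_succ
    approx_succ_iff.2 ⟨(approx_succ_iff.1 h).1.mono hrr, (approx_succ_iff.1 h).2.mono hrr⟩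

variable (L) in
lemma approx_antitone : Antitone L.approx :=
  antitone_nat_of_succ_le fun _ _ _ => approx_of_approx_succ

lemma IsBisimulation.approx (hb : L.IsBisimulation r) :
    ∀ (n : ℕ) {s t : S}, r s t → L.approx n s t
  | 0, _, _, _ => trivial
  | n + 1, s, t, hst =>
    have hrr : ∀ d d', REquiv r d d' → REquiv (L.approx n) d d' :=
      fun _ _ => REquiv.mono hb.1 (fun _ _ _ => approx_trans) fun _ _ => hb.approx n
    approx_succ_iff.2
      ⟨Simulates.mono (hb.2 s t hst) hrr, Simulates.mono (hb.2 t s (hb.1.symm hst)) hrr⟩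

lemma Bisim.approx (h : L.Bisim s t) (n : ℕ) : L.approx n s t :=
  h.choose_spec.1.approx n h.choose_spec.2

end Approx

section Stable

variable {S A : Type} {L : PLTS S A} {G : Set S}

def StepClosed (L : PLTS S A) (G : Set S) : Prop :=
  ∀ ⦃x⦄, x ∈ G → ∀ ⦃y⦄, L.Step x y → y ∈ G

def ApproxStableOn (L : PLTS S A) (n : ℕ) (G : Set S) : Prop :=
  ∀ x ∈ G, ∀ y ∈ G, L.approx n x y → L.approx (n + 1) x y

lemma StepClosed.support_subset (hG : L.StepClosed G) {x : S} (hx : x ∈ G) {a : A} {d : PMF S}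
    (hd : L.Tr x a d) : d.support ⊆ G :=
  fun _ hy => hG hx ⟨a, d, hd, hy⟩

lemma Simulates.of_eqOn {r r' : S → S → Prop} (hG : L.StepClosed G) {x y : S} (hx : x ∈ G)
    (hy : y ∈ G) (hr' : Equivalence r') (hagree : ∀ u ∈ G, ∀ v ∈ G, r' u v ↔ r u v)
    (h : L.Simulates r x y) : L.Simulates r' x y :=
  fun a d hd => (h a d hd).imp fun _ hd' =>
    ⟨hd'.1, hd'.2.of_eqOn hr' hagree (hG.support_subset hx hd) (hG.support_subset hy hd'.1)⟩

lemma ApproxStableOn.succ {n : ℕ} (hG : L.StepClosed G) (h : L.ApproxStableOn n G) :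
    L.ApproxStableOn (n + 1) G := by
  intro x hx y hy hxy
  have hagree : ∀ u ∈ G, ∀ v ∈ G, L.approx (n + 1) u v ↔ L.approx n u v :=
    fun u hu v hv => ⟨approx_of_approx_succ, h u hu v hv⟩
  have hup := fun {u v} (hu : u ∈ G) (hv : v ∈ G) (huv : L.Simulates (L.approx n) u v) =>
    huv.of_eqOn hG hu hv (L.approx_equivalence (n + 1)) hagree
  obtain ⟨hxy, hyx⟩ := approx_succ_iff.1 hxy
  exact approx_succ_iff.2 ⟨hup hx hy hxy, hup hy hx hyx⟩

lemma ApproxStableOn.of_le {m n : ℕ} (hG : L.StepClosed G) (h : L.ApproxStableOn m G)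
    (hmn : m ≤ n) : L.ApproxStableOn n G := by
  induction n, hmn using Nat.le_induction with
  | base => exact h
  | succ n _ ih => exact ih.succ hG

theorem bisim_of_approxStableOn {n : ℕ} (hG : L.StepClosed G) (hstab : L.ApproxStableOn n G)
    {x y : S} (hx : x ∈ G) (hy : y ∈ G) (h : L.approx n x y) : L.Bisim x y := by
  let R : S → S → Prop := fun u v => u = v ∨ (u ∈ G ∧ v ∈ G ∧ L.approx n u v)
  have hR : Equivalence R := by
    refine ⟨fun u => Or.inl rfl, ?_, ?_⟩
    · rintro u v (rfl | ⟨hu, hv, huv⟩)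
      exacts [Or.inl rfl, Or.inr ⟨hv, hu, approx_symm huv⟩]
    · rintro u v w (rfl | ⟨hu, hv, huv⟩) (rfl | ⟨hv, hw, hvw⟩)
      exacts [Or.inl rfl, Or.inr ⟨hv, hw, hvw⟩, Or.inr ⟨hu, hv, huv⟩,
        Or.inr ⟨hu, hw, approx_trans huv hvw⟩]
  have hagree : ∀ u ∈ G, ∀ v ∈ G, R u v ↔ L.approx n u v := fun u hu v hv =>
    ⟨by rintro (rfl | ⟨-, -, huv⟩); exacts [L.approx_refl n u, huv],
      fun huv => Or.inr ⟨hu, hv, huv⟩⟩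
  refine ⟨R, ⟨hR, ?_⟩, Or.inr ⟨hx, hy, h⟩⟩
  rintro u v (rfl | ⟨hu, hv, huv⟩)
  · exact Simulates.refl R u
  · exact (approx_succ_iff.1 (hstab u hu v hv huv)).1.of_eqOn hG hu hv hR hagree

lemma approxStableOn_range {Q : Type} [Finite Q] (ι : Q → S)
    (hι : L.StepClosed (Set.range ι)) : L.ApproxStableOn (Nat.card Q - 1) (Set.range ι) := by
  rcases isEmpty_or_nonempty Q with hQ | hQ
  · rintro _ ⟨f, rfl⟩
    exact isEmptyElim f
  let r : ℕ → Setoid Q := fun n => Setoid.comap ι ⟨L.approx n, L.approx_equivalence n⟩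
  obtain ⟨n₀, hn₀, hle⟩ := Setoid.exists_lt_card_le_succ_of_antitone (r := r)
    fun _ _ hmn _ _ h => L.approx_antitone hmn _ _ h
  have hstab : L.ApproxStableOn n₀ (Set.range ι) := by
    rintro _ ⟨f, rfl⟩ _ ⟨g, rfl⟩ h
    exact hle h
  exact hstab.of_le hι (by omega)

end Stable

section Sum

variable {S₁ S₂ A : Type} {L₁ : PLTS S₁ A} {L₂ : PLTS S₂ A}

lemma sum_tr_inl_iff {s : S₁} {a : A} {D : PMF (S₁ ⊕ S₂)} :
    (L₁.sum L₂).Tr (Sum.inl s) a D ↔ ∃ d, L₁.Tr s a d ∧ D = d.map Sum.inl := by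
  constructor
  · rintro (⟨_, d, hs, hd, rfl⟩ | ⟨_, _, hs, -, -⟩)
    · exact ⟨d, Sum.inl_injective hs ▸ hd, rfl⟩
    · exact Sum.inl_ne_inr hs |>.elim
  · rintro ⟨d, hd, rfl⟩
    exact Or.inl ⟨s, d, rfl, hd, rfl⟩

lemma stepClosed_sum_range_inr : (L₁.sum L₂).StepClosed (Set.range Sum.inr) := by
  rintro _ ⟨s, rfl⟩ y ⟨a, D, hD, hy⟩
  rcases hD with ⟨_, _, hs, -, -⟩ | ⟨_, d, -, -, rfl⟩
  · exact Sum.inr_ne_inl hs |>.elim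
  · obtain ⟨t, -, rfl⟩ := (PMF.mem_support_map_iff _ _ _).1 hy
    exact ⟨t, rfl⟩

lemma simulates_sum_inl_iff {r : S₁ ⊕ S₂ → S₁ ⊕ S₂ → Prop} (hr : Equivalence r) {s t : S₁} :
    (L₁.sum L₂).Simulates r (Sum.inl s) (Sum.inl t) ↔
      L₁.Simulates (fun u v => r (Sum.inl u) (Sum.inl v)) s t := by
  constructor
  · intro h a d hd
    obtain ⟨D', hD', e⟩ := h a _ (sum_tr_inl_iff.2 ⟨d, hd, rfl⟩)
    obtain ⟨d', hd', rfl⟩ := sum_tr_inl_iff.1 hD'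
    exact ⟨d', hd', (REquiv.map_iff _ hr).1 e⟩
  · intro h a D hD
    obtain ⟨d, hd, rfl⟩ := sum_tr_inl_iff.1 hD
    obtain ⟨d', hd', e⟩ := h a d hd
    exact ⟨_, sum_tr_inl_iff.2 ⟨d', hd', rfl⟩, (REquiv.map_iff _ hr).2 e⟩

lemma approx_sum_inl_iff : ∀ {n : ℕ} {s t : S₁},
    (L₁.sum L₂).approx n (Sum.inl s) (Sum.inl t) ↔ L₁.approx n s t
  | 0, _, _ => Iff.rfl
  | n + 1, _, _ => by
    have hr : (fun u v => (L₁.sum L₂).approx n (Sum.inl u) (Sum.inl v)) = L₁.approx n :=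
      funext₂ fun _ _ => propext approx_sum_inl_iff
    rw [approx_succ_iff, approx_succ_iff, simulates_sum_inl_iff (approx_equivalence _ n),
      simulates_sum_inl_iff (approx_equivalence _ n), hr]

end Sum

end PLTS

open PLTS

section POCA

variable {Q A : Type} {Δ : PPDARules Q OCSym A}

lemma POCAWf.step_oconf (hwf : POCAWf Δ) {p : Q} {m : ℕ} {c : Q × List OCSym}
    (h : Δ.plts.Step (oconf p m) c) : ∃ p' m', c = oconf p' m' := by
  obtain ⟨a, D, ⟨q, top, β, d, hc, hrule, rfl⟩, hne⟩ := h
  obtain ⟨⟨p', α⟩, hα, rfl⟩ := (PMF.mem_support_map_iff _ _ _).1 hne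
  simp only [oconf, Prod.mk.injEq] at hc
  obtain ⟨rfl, hstack⟩ := hc
  cases m with
  | zero =>
    obtain ⟨rfl, rfl⟩ := List.cons_eq_cons.1 hstack
    rcases hwf.2 _ a d hrule p' α hα with rfl | rfl
    exacts [⟨p', 0, rfl⟩, ⟨p', 1, rfl⟩]
  | succ m =>
    obtain ⟨rfl, rfl⟩ := List.cons_eq_cons.1 hstack
    rcases hwf.1 _ a d hrule p' α hα with rfl | rfl | rfl
    exacts [⟨p', m, rfl⟩, ⟨p', m + 1, rfl⟩, ⟨p', m + 2, rfl⟩]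

variable [Fintype Q]

lemma distINC_eq_top_iff {c : Q × List OCSym} :
    distINC Δ c = ⊤ ↔ ∀ ℓ p m, Δ.plts.StepN ℓ c (oconf p m) → ¬ InINC Δ p m := by
  simp only [distINC, sInf_eq_top, Set.mem_ofPred_eq]
  constructor
  · intro h ℓ p m hℓ hinc
    exact ENat.natCast_ne_top ℓ (h ℓ ⟨ℓ, rfl, p, m, hℓ, hinc⟩)
  · rintro h _ ⟨ℓ, rfl, p, m, hℓ, hinc⟩
    exact (h ℓ p m hℓ hinc).elim

lemma not_inINC_of_distINC_eq_top {p : Q} {m : ℕ} (h : distINC Δ (oconf p m) = ⊤) :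
    ¬ InINC Δ p m :=
  distINC_eq_top_iff.1 h 0 p m rfl

lemma distINC_eq_top_of_step {c c' : Q × List OCSym} (h : distINC Δ c = ⊤)
    (hc : Δ.plts.Step c c') : distINC Δ c' = ⊤ :=
  distINC_eq_top_iff.2 fun ℓ p m hℓ => distINC_eq_top_iff.1 h (ℓ + 1) p m ⟨c', hc, hℓ⟩

variable (Δ) in
def distINCTop : Set (Q × List OCSym) :=
  {c | ∃ p m, c = oconf p m ∧ distINC Δ c = ⊤}

lemma stepClosed_distINCTop (hwf : POCAWf Δ) : Δ.plts.StepClosed (distINCTop Δ) := by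
  rintro _ ⟨p, m, rfl, hp⟩ c hc
  obtain ⟨p', m', rfl⟩ := hwf.step_oconf hc
  exact ⟨p', m', rfl, distINC_eq_top_of_step hp hc⟩

lemma exists_approx_inr_of_distINC_eq_top {p : Q} {m : ℕ} (h : distINC Δ (oconf p m) = ⊤) :
    ∃ f, (Δ.plts.sum (underlying Δ)).approx (Fintype.card Q) (Sum.inl (oconf p m)) (Sum.inr f) :=
  by simpa [InINC] using not_inINC_of_distINC_eq_top h

lemma approxStableOn_distINCTop :
    Δ.plts.ApproxStableOn (Fintype.card Q - 1) (distINCTop Δ) := by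
  rintro _ ⟨p, m, rfl, hp⟩ _ ⟨q, n, rfl, hq⟩ h
  obtain ⟨f, hf⟩ := exists_approx_inr_of_distINC_eq_top hp
  obtain ⟨g, hg⟩ := exists_approx_inr_of_distINC_eq_top hq
  have hk : Fintype.card Q - 1 + 1 = Fintype.card Q :=
    Nat.sub_add_cancel (Fintype.card_pos_iff.2 ⟨p⟩)
  have hfg : (Δ.plts.sum (underlying Δ)).approx (Fintype.card Q - 1) (Sum.inr f) (Sum.inr g) :=
    approx_trans (approx_symm (approx_antitone _ (Nat.sub_le _ 1) _ _ hf))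
      (approx_trans (approx_sum_inl_iff.2 h) (approx_antitone _ (Nat.sub_le _ 1) _ _ hg))
  have hstab := approxStableOn_range (L := Δ.plts.sum (underlying Δ)) Sum.inr
    stepClosed_sum_range_inr
  rw [Nat.card_eq_fintype_card] at hstab
  have hfg' := hstab _ ⟨f, rfl⟩ _ ⟨g, rfl⟩ hfg
  rw [hk] at hfg'
  rw [hk, ← approx_sum_inl_iff]
  exact approx_trans hf (approx_trans hfg' (approx_symm hg))

end POCA

theorem bisim_iff_approx_of_distINC_top_general (Q A : Type) [Fintype Q]
    (Δ : PPDARules Q OCSym A) (hwf : POCAWf Δ) (p q : Q) (m n : ℕ)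
    (hp : distINC Δ (oconf p m) = ⊤) (hq : distINC Δ (oconf q n) = ⊤) :
    Δ.plts.Bisim (oconf p m) (oconf q n) ↔
      Δ.plts.approx (Fintype.card Q) (oconf p m) (oconf q n) :=
  ⟨fun h => h.approx _, fun h =>
    bisim_of_approxStableOn (stepClosed_distINCTop hwf) approxStableOn_distINCTop
      ⟨p, m, rfl, hp⟩ ⟨q, n, rfl, hq⟩ (Δ.plts.approx_antitone (Nat.sub_le _ 1) _ _ h)⟩

/-- For a pOCA `Δ` with `k = |Q|`: if
`dist(pXᵐZ) = dist(qXⁿZ) = ∞` then `pXᵐZ ∼ qXⁿZ` iff `pXᵐZ ∼ₖ qXⁿZ`. -/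
theorem bisim_iff_approx_of_distINC_top (Q A : Type) [Fintype Q] [Fintype A]
    (Δ : PPDARules Q OCSym A) (hwf : POCAWf Δ) (p q : Q) (m n : ℕ)
    (hp : distINC Δ (oconf p m) = ⊤) (hq : distINC Δ (oconf q n) = ⊤) :
    Δ.plts.Bisim (oconf p m) (oconf q n) ↔
      Δ.plts.approx (Fintype.card Q) (oconf p m) (oconf q n) :=
  bisim_iff_approx_of_distINC_top_general Q A Δ hwf p q m n hp hq
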